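/- arXiv:math/0307250 — 2 statements merged into one kernel-verified Lean document; each statement's English description precedes it below -/
import Mathlib

section
/- For 0 < q < 1, 0 < a < 1/q and b < 1/q with b ≠ 0, the q-binomial identity ∑_{n=0}^∞ ((bq;q)_n / (q;q)_n) (aq)^n = (abq²;q)_∞ / (aq;q)_∞ holds. -/
/-!
With `cₙ = (z;q)ₙ/(q;q)ₙ`, the recurrence `(1 - q^(n+1)) cₙ₊₁ = (1 - z qⁿ) cₙ` shows that
`f(x) = ∑ cₙ xⁿ` converges for `|x| < 1` (ratio test) and satisfies
`(1 - x) f(x) = (1 - z x) f(q x)`. Iterating gives `(x;q)_N f(x) = (zx;q)_N f(q^N x)`, and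
`f(q^N x) → f(0) = 1` by dominated convergence; take `z = bq`, `x = aq`.
-/

/-- The finite q-Pochhammer symbol `(x;q)_n = ∏_{k=0}^{n-1} (1 - x q^k)`. -/
noncomputable def qp (q x : ℝ) (n : ℕ) : ℝ := ∏ k ∈ Finset.range n, (1 - x * q ^ k)

/-- The infinite q-Pochhammer symbol `(x;q)_∞ = ∏_{k=0}^{∞} (1 - x q^k)`. -/
noncomputable def qpInf (q x : ℝ) : ℝ := ∏' k : ℕ, (1 - x * q ^ k)

open Filter Topology

section Pochhammer

variable {q : ℝ}

lemma qp_succ (q x : ℝ) (n : ℕ) : qp q x (n + 1) = qp q x n * (1 - x * q ^ n) :=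
  Finset.prod_range_succ _ _

lemma abs_pow_mul_le (hq : |q| ≤ 1) (x : ℝ) (N : ℕ) : |q ^ N * x| ≤ |x| := by
  rw [abs_mul, abs_pow]
  exact mul_le_of_le_one_left (abs_nonneg x) (pow_le_one₀ (abs_nonneg q) hq)

lemma one_sub_mul_pow_ne_zero (hq : |q| ≤ 1) {x : ℝ} (hx : |x| < 1) (k : ℕ) :
    1 - x * q ^ k ≠ 0 := by
  intro h
  have := (abs_pow_mul_le hq x k).trans_lt hx
  rw [mul_comm, ← eq_of_sub_eq_zero h, abs_one] at this
  exact this.false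

lemma one_sub_pow_succ_ne_zero (hq : |q| < 1) (n : ℕ) : 1 - q ^ (n + 1) ≠ 0 := by
  rw [pow_succ']
  exact one_sub_mul_pow_ne_zero hq.le hq n

lemma qp_self_ne_zero (hq : |q| < 1) (n : ℕ) : qp q q n ≠ 0 :=
  Finset.prod_ne_zero_iff.2 fun k _ => one_sub_mul_pow_ne_zero hq.le hq k

lemma summable_norm_neg_mul_pow (hq : |q| < 1) (x : ℝ) :
    Summable fun k : ℕ => ‖-(x * q ^ k)‖ := by
  simpa [abs_mul, abs_pow] using (summable_geometric_of_lt_one (abs_nonneg q) hq).mul_left |x|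

lemma hasProd_qpInf (hq : |q| < 1) (x : ℝ) :
    HasProd (fun k : ℕ => 1 - x * q ^ k) (qpInf q x) := by
  have : Multipliable fun k : ℕ => 1 - x * q ^ k := by
    simpa [sub_eq_add_neg] using multipliable_one_add_of_summable (summable_norm_neg_mul_pow hq x)
  exact this.hasProd

lemma tendsto_qp_qpInf (hq : |q| < 1) (x : ℝ) :
    Tendsto (qp q x) atTop (𝓝 (qpInf q x)) :=
  (hasProd_qpInf hq x).tendsto_prod_nat

lemma qpInf_ne_zero (hq : |q| < 1) {x : ℝ} (hx : |x| < 1) : qpInf q x ≠ 0 := by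
  simpa [qpInf, sub_eq_add_neg] using tprod_one_add_ne_zero_of_summable
    (fun k => by simpa [sub_eq_add_neg] using one_sub_mul_pow_ne_zero hq.le hx k)
    (summable_norm_neg_mul_pow hq x)

end Pochhammer

noncomputable def qBinomCoeff (q z : ℝ) (n : ℕ) : ℝ := qp q z n / qp q q n

noncomputable def qBinomSeries (q z x : ℝ) : ℝ := ∑' n, qBinomCoeff q z n * x ^ n

section QBinomial

variable {q : ℝ} (z : ℝ)

@[simp] lemma qBinomCoeff_zero : qBinomCoeff q z 0 = 1 := by simp [qBinomCoeff, qp]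

lemma qBinomCoeff_succ (hq : |q| < 1) (n : ℕ) :
    qBinomCoeff q z (n + 1) * (1 - q ^ (n + 1)) = qBinomCoeff q z n * (1 - z * q ^ n) := by
  have hn := qp_self_ne_zero hq n
  have hn' := one_sub_pow_succ_ne_zero hq n
  simp only [qBinomCoeff, qp_succ, ← pow_succ']
  field_simp

lemma summable_norm_qBinomCoeff_mul_pow (hq : |q| < 1) {x : ℝ} (hx : |x| < 1) :
    Summable fun n => ‖qBinomCoeff q z n * x ^ n‖ := by
  obtain ⟨r, hxr, hr⟩ := exists_between hx
  refine summable_of_ratio_norm_eventually_le hr ?_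
  have hratio : Tendsto (fun n : ℕ => |x| * |1 - z * q ^ n| / |1 - q ^ (n + 1)|) atTop
      (𝓝 (|x| * |1 - z * 0| / |1 - 0|)) := by
    have hpow := tendsto_pow_atTop_nhds_zero_of_abs_lt_one hq
    exact ((((hpow.const_mul z).const_sub 1).abs.const_mul |x|).div
      ((hpow.comp (tendsto_add_atTop_nat 1)).const_sub 1).abs (by simp))
  simp only [mul_zero, sub_zero, abs_one, mul_one, div_one] at hratio
  filter_upwards [hratio.eventually_le_const hxr] with n hn
  have hne : |1 - q ^ (n + 1)| ≠ 0 := abs_ne_zero.2 (one_sub_pow_succ_ne_zero hq n)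
  have habs : |qBinomCoeff q z (n + 1)|
      = |qBinomCoeff q z n| * |1 - z * q ^ n| / |1 - q ^ (n + 1)| := by
    rw [eq_div_iff hne, ← abs_mul, qBinomCoeff_succ z hq n, abs_mul]
  simp only [Real.norm_eq_abs, abs_abs, abs_mul, abs_pow]
  rw [habs, pow_succ]
  calc |qBinomCoeff q z n| * |1 - z * q ^ n| / |1 - q ^ (n + 1)| * (|x| ^ n * |x|)
      = |x| * |1 - z * q ^ n| / |1 - q ^ (n + 1)| * (|qBinomCoeff q z n| * |x| ^ n) := by ring
    _ ≤ r * (|qBinomCoeff q z n| * |x| ^ n) := by gcongr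

lemma hasSum_qBinomSeries (hq : |q| < 1) {x : ℝ} (hx : |x| < 1) :
    HasSum (fun n => qBinomCoeff q z n * x ^ n) (qBinomSeries q z x) :=
  (summable_norm_qBinomCoeff_mul_pow z hq hx).of_norm.hasSum

lemma qBinomSeries_functional_eq (hq : |q| < 1) {x : ℝ} (hx : |x| < 1) :
    (1 - x) * qBinomSeries q z x = (1 - z * x) * qBinomSeries q z (q * x) := by
  have hqx : |q * x| < 1 := by simpa using (abs_pow_mul_le hq.le x 1).trans_lt hx
  have tail : ∀ {y : ℝ}, |y| < 1 →
      HasSum (fun n => qBinomCoeff q z (n + 1) * y ^ (n + 1)) (qBinomSeries q z y - 1) := by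
    intro y hy
    simpa using (hasSum_nat_add_iff' 1).2 (hasSum_qBinomSeries z hq hy)
  have h1 := (tail hx).sub ((hasSum_qBinomSeries z hq hx).mul_left x)
  have h2 := (tail hqx).sub ((hasSum_qBinomSeries z hq hqx).mul_left (z * x))
  have termwise : (fun n => qBinomCoeff q z (n + 1) * (q * x) ^ (n + 1)
        - z * x * (qBinomCoeff q z n * (q * x) ^ n))
      = fun n => qBinomCoeff q z (n + 1) * x ^ (n + 1) - x * (qBinomCoeff q z n * x ^ n) := by
    funext n
    rw [mul_pow, mul_pow]
    linear_combination (-(x ^ (n + 1))) * qBinomCoeff_succ z hq n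
  rw [termwise] at h2
  linarith [h1.unique h2]

lemma qp_mul_qBinomSeries (hq : |q| < 1) {x : ℝ} (hx : |x| < 1) (N : ℕ) :
    qp q x N * qBinomSeries q z x = qp q (z * x) N * qBinomSeries q z (q ^ N * x) := by
  induction N with
  | zero => simp [qp]
  | succ N ih =>
    have hfe := qBinomSeries_functional_eq z hq ((abs_pow_mul_le hq.le x N).trans_lt hx)
    rw [qp_succ, qp_succ, pow_succ', mul_assoc q]
    linear_combination (1 - x * q ^ N) * ih + qp q (z * x) N * hfe

lemma tendsto_qBinomSeries_pow_mul (hq : |q| < 1) {x : ℝ} (hx : |x| < 1) :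
    Tendsto (fun N : ℕ => qBinomSeries q z (q ^ N * x)) atTop (𝓝 1) := by
  have hlim (n : ℕ) : Tendsto (fun N : ℕ => qBinomCoeff q z n * (q ^ N * x) ^ n) atTop
      (𝓝 (qBinomCoeff q z n * (0 * x) ^ n)) :=
    (((tendsto_pow_atTop_nhds_zero_of_abs_lt_one hq).mul_const x).pow n).const_mul _
  have hbound : ∀ᶠ N : ℕ in atTop, ∀ n,
      ‖qBinomCoeff q z n * (q ^ N * x) ^ n‖ ≤ ‖qBinomCoeff q z n * x ^ n‖ := by
    refine Eventually.of_forall fun N n => ?_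
    simp only [norm_mul, norm_pow, Real.norm_eq_abs]
    gcongr
    simpa using abs_pow_mul_le hq.le x N
  simpa [qBinomSeries, zero_pow_eq] using
    tendsto_tsum_of_dominated_convergence (summable_norm_qBinomCoeff_mul_pow z hq hx) hlim hbound

lemma qpInf_mul_qBinomSeries (hq : |q| < 1) {x : ℝ} (hx : |x| < 1) :
    qpInf q x * qBinomSeries q z x = qpInf q (z * x) := by
  have hL := (tendsto_qp_qpInf hq x).mul_const (qBinomSeries q z x)
  have hR := (tendsto_qp_qpInf hq (z * x)).mul (tendsto_qBinomSeries_pow_mul z hq hx)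
  rw [mul_one] at hR
  exact tendsto_nhds_unique (hL.congr (qp_mul_qBinomSeries z hq hx)) hR

theorem hasSum_qBinomCoeff_mul_pow (hq : |q| < 1) {x : ℝ} (hx : |x| < 1) :
    HasSum (fun n => qBinomCoeff q z n * x ^ n) (qpInf q (z * x) / qpInf q x) := by
  rw [← qpInf_mul_qBinomSeries z hq hx, mul_div_cancel_left₀ _ (qpInf_ne_zero hq hx)]
  exact hasSum_qBinomSeries z hq hx

end QBinomial

theorem q_binomial_general (q a b : ℝ) (hq0 : 0 < q) (hq1 : q < 1)
    (ha0 : 0 < a) (ha1 : a < 1 / q) :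
    HasSum (fun n : ℕ => qp q (b * q) n / qp q q n * (a * q) ^ n)
      (qpInf q (a * b * q ^ 2) / qpInf q (a * q)) := by
  have hq : |q| < 1 := by rwa [abs_of_pos hq0]
  have hx : |a * q| < 1 := by
    rw [abs_of_pos (by positivity), ← lt_div_iff₀ hq0]
    exact ha1
  rw [show a * b * q ^ 2 = b * q * (a * q) by ring]
  exact hasSum_qBinomCoeff_mul_pow (b * q) hq hx

/-- q-binomial theorem, eq. (4.9):
`∑_{n≥0} ((bq;q)_n/(q;q)_n) (aq)^n = (abq²;q)_∞/(aq;q)_∞`. -/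
theorem q_binomial (q a b : ℝ) (hq0 : 0 < q) (hq1 : q < 1)
    (ha0 : 0 < a) (ha1 : a < 1 / q) (hb : b < 1 / q) (hb0 : b ≠ 0) :
    HasSum (fun n : ℕ => qp q (b * q) n / qp q q n * (a * q) ^ n)
      (qpInf q (a * b * q ^ 2) / qpInf q (a * q)) :=
  q_binomial_general q a b hq0 hq1 ha0 ha1
end

section
/- For 0 < q < 1, a ≠ 0, and |t| < 1, |at| < 1, and nonnegative integer x, the Al-Salam–Carlitz II generating function ∑_{n=0}^∞ ((−1)^n q^{n(n-1)/2}/(q;q)_n) t^n V_n^{(a)}(q^{-x};q) = (tq^{-x};q)_∞ / ((at;q)_∞ (t;q)_∞) holds. -/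
/-- The finite q-Pochhammer symbol over ℂ. -/
noncomputable def qpC (q x : ℂ) (n : ℕ) : ℂ := ∏ k ∈ Finset.range n, (1 - x * q ^ k)

/-- The infinite q-Pochhammer symbol over ℂ. -/
noncomputable def qpInfC (q x : ℂ) : ℂ := ∏' k : ℕ, (1 - x * q ^ k)

open Finset Filter

section prodinf

/-- splice a finite head onto a HasProd tail -/
lemma hasProd_splice {f : ℕ → ℂ} (m : ℕ) {b : ℂ} (h : HasProd (fun k => f (k + m)) b) :
    HasProd f ((∏ k ∈ Finset.range m, f k) * b) := by
  classical
  have hfin : HasProd (f ∘ (↑) : (↑(Finset.range m) : Set ℕ) → ℂ)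
      (∏ k ∈ Finset.range m, f k) := (Finset.range m).hasProd f
  let e : ℕ ≃ ((↑(Finset.range m) : Set ℕ)ᶜ : Set ℕ) :=
    { toFun := fun k => ⟨k + m, by simp⟩
      invFun := fun n => n.1 - m
      left_inv := fun k => by simp
      right_inv := fun n => by
        have := n.2
        simp only [Set.mem_compl_iff, Finset.coe_range, Set.mem_Iio, not_lt] at this
        ext; simp; omega }
  have hcompl : HasProd (f ∘ (↑) : ((↑(Finset.range m) : Set ℕ)ᶜ : Set ℕ) → ℂ) b := by
    rw [← e.hasProd_iff]
    exact h
  exact hfin.mul_compl hcompl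

variable {q : ℝ} (hq0 : 0 < q) (hq1 : q < 1)

lemma normQ (hq0 : 0 < q) : ‖(q : ℂ)‖ = q := by
  rw [Complex.norm_real, Real.norm_eq_abs, abs_of_pos hq0]

include hq0 hq1 in
lemma mult_tail {w : ℂ} (hw : ‖w‖ ≤ 1/2) :
    Multipliable (fun k : ℕ => 1 - w * (q : ℂ) ^ k) := by
  have hnorm : ∀ k : ℕ, ‖w * (q : ℂ) ^ k‖ ≤ ‖w‖ := by
    intro k
    rw [norm_mul, norm_pow, normQ hq0]
    calc ‖w‖ * q ^ k ≤ ‖w‖ * 1 := by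
          gcongr
          exact pow_le_one₀ hq0.le hq1.le
      _ = ‖w‖ := mul_one _
  have hne : ∀ (_ : Unit) (k : ℕ), (fun k (_ : Unit) => 1 - w * (q : ℂ) ^ k) k () ≠ 0 := by
    intro _ k
    simp only
    intro hcon
    have h1 : ‖w * (q : ℂ) ^ k‖ = 1 := by
      have h2 : (1 : ℂ) = w * (q : ℂ) ^ k := by linear_combination hcon
      rw [← h2]; simp
    have h3 := (hnorm k).trans hw
    rw [h1] at h3
    linarith
  have hsum : ∀ (_ : Unit), Summable fun k : ℕ => Complex.log (1 - w * (q : ℂ) ^ k) := by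
    intro _
    apply Summable.of_norm_bounded (g := fun k => 3/2 * (‖w‖ * q ^ k))
    · exact (summable_geometric_of_lt_one hq0.le hq1).mul_left _ |>.mul_left _
    · intro k
      have h2 : ‖-(w * (q:ℂ)^k)‖ ≤ 1/2 := by rw [norm_neg]; exact (hnorm k).trans hw
      have := Complex.norm_log_one_add_half_le_self h2
      rw [show (1 : ℂ) + -(w * (q:ℂ)^k) = 1 - w * (q:ℂ)^k by ring] at this
      rw [norm_neg, norm_mul, norm_pow, normQ hq0] at this
      exact this
  exact Complex.multipliable_of_summable_log (hsum ())

include hq0 hq1 in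
lemma mult_qp (z : ℂ) : Multipliable (fun k : ℕ => 1 - z * (q : ℂ) ^ k) := by
  obtain ⟨m, hm⟩ : ∃ m : ℕ, ‖z‖ * q ^ m ≤ 1/2 := by
    rcases le_or_gt ‖z‖ (1/2) with h | h
    · refine ⟨0, ?_⟩
      simpa using h
    · obtain ⟨m, hm⟩ := exists_pow_lt_of_lt_one (x := (1/2) / ‖z‖) (by positivity) hq1
      refine ⟨m, ?_⟩
      have hz0 : 0 < ‖z‖ := by linarith
      have h4 : ‖z‖ * q ^ m ≤ ‖z‖ * ((1/2) / ‖z‖) := by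
        apply mul_le_mul_of_nonneg_left hm.le hz0.le
      rw [mul_div_cancel₀] at h4
      · exact h4
      · exact hz0.ne'
  have htail : Multipliable (fun k : ℕ => 1 - (z * (q:ℂ)^m) * (q : ℂ) ^ k) := by
    apply mult_tail hq0 hq1
    rw [norm_mul, norm_pow, normQ hq0]; exact hm
  have hfun : (fun k : ℕ => 1 - z * (q : ℂ) ^ (k + m))
      = fun k : ℕ => 1 - (z * (q:ℂ)^m) * (q : ℂ) ^ k := by
    funext k; ring
  have h5 : HasProd (fun k : ℕ => 1 - z * (q : ℂ) ^ (k + m))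
      (∏' k : ℕ, (1 - (z * (q:ℂ)^m) * (q : ℂ) ^ k)) := by
    rw [hfun]; exact htail.hasProd
  exact (hasProd_splice (f := fun k : ℕ => 1 - z * (q:ℂ)^k) m h5).multipliable

include hq0 hq1 in
lemma qpInf_split (z : ℂ) (m : ℕ) :
    qpInfC (q : ℂ) z = (∏ k ∈ Finset.range m, (1 - z * (q:ℂ) ^ k)) * qpInfC (q:ℂ) (z * (q:ℂ)^m) := by
  have htail := mult_qp hq0 hq1 (z * (q:ℂ)^m)
  have hfun : (fun k : ℕ => 1 - z * (q : ℂ) ^ (k + m))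
      = fun k : ℕ => 1 - (z * (q:ℂ)^m) * (q : ℂ) ^ k := by
    funext k; ring
  have h1 : HasProd (fun k : ℕ => 1 - z * (q : ℂ) ^ (k + m)) (qpInfC (q:ℂ) (z * (q:ℂ)^m)) := by
    unfold qpInfC
    rw [hfun]; exact htail.hasProd
  have h2 := hasProd_splice (f := fun k : ℕ => 1 - z * (q:ℂ)^k) m h1
  have h3 : HasProd (fun k : ℕ => 1 - z * (q : ℂ) ^ k) (qpInfC (q:ℂ) z) := by
    unfold qpInfC; exact (mult_qp hq0 hq1 z).hasProd
  exact h3.unique h2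

end prodinf

section euler

variable {q : ℝ} (hq0 : 0 < q) (hq1 : q < 1)

noncomputable def pR (q : ℝ) (n : ℕ) : ℝ := ∏ j ∈ Finset.range n, (1 - q ^ (j + 1))

lemma qpC_q_eq (q : ℝ) (n : ℕ) : qpC (q:ℂ) (q:ℂ) n = ((pR q n : ℝ) : ℂ) := by
  unfold qpC pR
  push_cast
  refine Finset.prod_congr rfl fun k _ => ?_
  rw [pow_succ]
  ring

include hq0 hq1 in
lemma pR_pos (n : ℕ) : 0 < pR q n := by
  apply Finset.prod_pos
  intro j _
  have : q ^ (j+1) < 1 := pow_lt_one₀ hq0.le hq1 (Nat.succ_ne_zero j)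
  linarith

include hq0 hq1 in
lemma qpC_q_ne (n : ℕ) : qpC (q:ℂ) (q:ℂ) n ≠ 0 := by
  rw [qpC_q_eq]
  exact_mod_cast (pR_pos hq0 hq1 n).ne'

lemma one_sub_sum_le_prod (s : Finset ℕ) (a : ℕ → ℝ) (h0 : ∀ i ∈ s, 0 ≤ a i)
    (h1 : ∀ i ∈ s, a i ≤ 1) : 1 - ∑ i ∈ s, a i ≤ ∏ i ∈ s, (1 - a i) := by
  classical
  induction s using Finset.cons_induction with
  | empty => simp
  | cons j s hj ih =>
    rw [Finset.prod_cons, Finset.sum_cons]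
    have hS : 0 ≤ ∑ i ∈ s, a i :=
      Finset.sum_nonneg fun i hi => h0 i (Finset.mem_cons_of_mem hi)
    have haj0 : 0 ≤ a j := h0 j (Finset.mem_cons_self j s)
    have haj1 : a j ≤ 1 := h1 j (Finset.mem_cons_self j s)
    have ih' := ih (fun i hi => h0 i (Finset.mem_cons_of_mem hi))
      (fun i hi => h1 i (Finset.mem_cons_of_mem hi))
    have h2 : (1 - a j) * (1 - ∑ i ∈ s, a i) ≤ (1 - a j) * ∏ i ∈ s, (1 - a i) := by
      apply mul_le_mul_of_nonneg_left ih' (by linarith)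
    nlinarith

include hq0 hq1 in
lemma pR_lower : ∃ c : ℝ, 0 < c ∧ ∀ n, c ≤ pR q n := by
  obtain ⟨m, hm⟩ := exists_pow_lt_of_lt_one (x := (1-q)/2) (by linarith) hq1
  refine ⟨pR q m / 2, by have := pR_pos hq0 hq1 m; linarith, fun n => ?_⟩
  have hfac : ∀ j : ℕ, 0 < 1 - q ^ (j+1) := by
    intro j
    have : q ^ (j+1) < 1 := pow_lt_one₀ hq0.le hq1 (Nat.succ_ne_zero j)
    linarith
  rcases le_or_gt n m with h | h
  · have hsplit : pR q m = pR q n * ∏ j ∈ Finset.Ico n m, (1 - q ^ (j+1)) := by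
      unfold pR
      rw [Finset.prod_range_mul_prod_Ico _ h]
    have hle1 : ∏ j ∈ Finset.Ico n m, (1 - q ^ (j+1)) ≤ 1 :=
      Finset.prod_le_one (fun j _ => (hfac j).le)
        (fun j _ => by have := pow_pos hq0 (j+1); linarith)
    have := pR_pos hq0 hq1 n
    nlinarith [pR_pos hq0 hq1 m]
  · have hsplit : pR q n = pR q m * ∏ j ∈ Finset.Ico m n, (1 - q ^ (j+1)) := by
      unfold pR
      rw [Finset.prod_range_mul_prod_Ico _ h.le]
    have hsum : ∑ j ∈ Finset.Ico m n, q ^ (j+1) ≤ 1/2 := by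
      rw [Finset.sum_Ico_eq_sum_range]
      have h1 : ∀ i ∈ Finset.range (n - m), q ^ (m + i + 1) = q^(m+1) * q^i := by
        intro i _; rw [← pow_add]; ring_nf
      rw [Finset.sum_congr rfl h1, ← Finset.mul_sum]
      have h2 : ∑ i ∈ Finset.range (n-m), q^i ≤ (1-q)⁻¹ := by
        have := Summable.sum_le_tsum (Finset.range (n-m)) (fun i _ => (pow_pos hq0 i).le)
          (summable_geometric_of_lt_one hq0.le hq1)
        rwa [tsum_geometric_of_lt_one hq0.le hq1] at this
      have h3 : q^(m+1) ≤ (1-q)/2 := by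
        calc q^(m+1) = q^m * q := by rw [pow_succ]
          _ ≤ q^m * 1 := by nlinarith [pow_pos hq0 m]
          _ = q^m := mul_one _
          _ ≤ (1-q)/2 := hm.le
      calc q^(m+1) * ∑ i ∈ Finset.range (n-m), q^i ≤ ((1-q)/2) * (1-q)⁻¹ := by
            apply mul_le_mul h3 h2 (Finset.sum_nonneg fun i _ => (pow_pos hq0 i).le) (by linarith)
        _ = 1/2 := by
            have h1q : (1:ℝ) - q ≠ 0 := by linarith
            field_simp
    have hW : 1 - ∑ j ∈ Finset.Ico m n, q ^ (j+1) ≤ ∏ j ∈ Finset.Ico m n, (1 - q^(j+1)) :=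
      one_sub_sum_le_prod _ _ (fun j _ => (pow_pos hq0 (j+1)).le)
        (fun j _ => pow_le_one₀ hq0.le hq1.le)
    have := pR_pos hq0 hq1 m
    nlinarith

include hq0 hq1 in
set_option maxHeartbeats 1000000 in
lemma euler_hasSum {z : ℂ} (hz : ‖z‖ < 1) :
    qpInfC (q:ℂ) z ≠ 0 ∧
      HasSum (fun n : ℕ => z ^ n / qpC (q:ℂ) (q:ℂ) n) ((qpInfC (q:ℂ) z)⁻¹) := by
  obtain ⟨c, hc, hcle⟩ := pR_lower hq0 hq1
  set D : ℕ → ℂ := fun n => qpC (q:ℂ) (q:ℂ) n with hD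
  have hDnorm : ∀ n, ‖D n‖ = pR q n := by
    intro n
    show ‖qpC (q:ℂ) (q:ℂ) n‖ = pR q n
    rw [qpC_q_eq, Complex.norm_real, Real.norm_eq_abs, abs_of_pos (pR_pos hq0 hq1 n)]
  have hD0 : ∀ n, D n ≠ 0 := fun n => qpC_q_ne hq0 hq1 n
  have hsummable : ∀ w : ℂ, ‖w‖ ≤ ‖z‖ → Summable (fun n : ℕ => w ^ n / D n) := by
    intro w hw
    apply Summable.of_norm_bounded (g := fun n => c⁻¹ * ‖z‖ ^ n)
    · exact (summable_geometric_of_lt_one (norm_nonneg z) hz).mul_left _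
    · intro n
      rw [norm_div, norm_pow, hDnorm]
      have h1 : ‖w‖ ^ n ≤ ‖z‖ ^ n := pow_le_pow_left₀ (norm_nonneg w) hw n
      calc ‖w‖^n / pR q n ≤ ‖z‖^n / c :=
            div_le_div₀ (pow_nonneg (norm_nonneg z) n) h1 hc (hcle n)
        _ = c⁻¹ * ‖z‖^n := by rw [div_eq_inv_mul]
  set S : ℂ → ℂ := fun w => ∑' n : ℕ, w ^ n / D n with hSdef
  have hfeq : ∀ w : ℂ, ‖w‖ ≤ ‖z‖ → S ((q:ℂ) * w) = (1 - w) * S w := by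
    intro w hw
    have hS : HasSum (fun n : ℕ => w ^ n / D n) (S w) := (hsummable w hw).hasSum
    set g : ℕ → ℂ := fun n => if n = 0 then 0 else w ^ n / D (n-1) with hgdef
    have hg1 : HasSum (fun n : ℕ => g (n+1)) (w * S w) := by
      have h1 : (fun n : ℕ => g (n+1)) = fun n : ℕ => w * (w^n / D n) := by
        funext n
        simp only [hgdef, Nat.succ_ne_zero, if_false, Nat.add_sub_cancel]
        rw [pow_succ]
        ring
      rw [h1]
      exact hS.mul_left w
    have hg : HasSum g (w * S w) := by
      have := (hasSum_nat_add_iff (f := g) 1).1 hg1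
      simpa [hgdef] using this
    have hsub := hS.sub hg
    have key : (fun n : ℕ => w^n / D n - g n) = fun n : ℕ => ((q:ℂ)*w)^n / D n := by
      funext n
      cases n with
      | zero => simp [hgdef, hD, qpC]
      | succ k =>
        simp only [hgdef, Nat.succ_ne_zero, if_false, Nat.add_sub_cancel]
        have hDrec : D (k+1) = D k * (1 - (q:ℂ)^(k+1)) := by
          simp only [hD]
          unfold qpC
          rw [Finset.prod_range_succ, pow_succ]
          ring
        have h1 : D k ≠ 0 := hD0 k
        have h2 : (1 : ℂ) - (q:ℂ)^(k+1) ≠ 0 := by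
          intro hcon
          apply hD0 (k+1)
          rw [hDrec, hcon, mul_zero]
        rw [hDrec, mul_pow]
        field_simp
        ring
    rw [key] at hsub
    have := hsub.tsum_eq
    rw [hSdef]
    simp only at this ⊢
    rw [this]
    ring
  have hiter : ∀ N : ℕ, S ((q:ℂ)^N * z) = qpC (q:ℂ) z N * S z := by
    intro N
    induction N with
    | zero => simp [qpC]
    | succ N ih =>
      have hnorm : ‖(q:ℂ)^N * z‖ ≤ ‖z‖ := by
        rw [norm_mul, norm_pow, normQ hq0]
        have h1 : q^N ≤ 1 := pow_le_one₀ hq0.le hq1.le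
        nlinarith [norm_nonneg z, pow_pos hq0 N]
      have h2 := hfeq ((q:ℂ)^N * z) hnorm
      rw [show (q:ℂ)^(N+1) * z = (q:ℂ) * ((q:ℂ)^N * z) by ring, h2, ih]
      unfold qpC
      rw [Finset.prod_range_succ]
      ring
  have hbound : ∀ w : ℂ, ‖w‖ ≤ ‖z‖ → ‖S w - 1‖ ≤ ‖w‖ * (c⁻¹ * (1 - ‖z‖)⁻¹) := by
    intro w hw
    have hsw := hsummable w hw
    have hzero : S w = w^0 / D 0 + ∑' n : ℕ, w^(n+1) / D (n+1) := by
      rw [hSdef]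
      simp only
      exact Summable.tsum_eq_zero_add hsw
    have hD0' : D 0 = 1 := by simp [hD, qpC]
    have htail : S w - 1 = ∑' n : ℕ, w^(n+1) / D (n+1) := by
      rw [hzero, hD0']
      simp
    rw [htail]
    have hsumtail : Summable (fun n : ℕ => w^(n+1)/D (n+1)) := by
      exact (summable_nat_add_iff 1).2 hsw
    have hbnd : ∀ n : ℕ, ‖w^(n+1)/D (n+1)‖ ≤ ‖w‖ * (c⁻¹ * ‖z‖^n) := by
      intro n
      rw [norm_div, norm_pow, hDnorm]
      have h1 : ‖w‖^(n+1) ≤ ‖w‖ * ‖z‖^n := by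
        rw [pow_succ']
        apply mul_le_mul_of_nonneg_left _ (norm_nonneg w)
        exact pow_le_pow_left₀ (norm_nonneg w) hw n
      calc ‖w‖^(n+1) / pR q (n+1) ≤ (‖w‖ * ‖z‖^n) / c :=
            div_le_div₀ (by positivity) h1 hc (hcle (n+1))
        _ = ‖w‖ * (c⁻¹ * ‖z‖^n) := by field_simp
    have hsumbnd : Summable (fun n : ℕ => ‖w‖ * (c⁻¹ * ‖z‖^n)) :=
      ((summable_geometric_of_lt_one (norm_nonneg z) hz).mul_left _).mul_left _
    have hsumnorm : Summable (fun n : ℕ => ‖w^(n+1)/D (n+1)‖) :=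
      Summable.of_nonneg_of_le (fun n => norm_nonneg _) hbnd hsumbnd
    calc ‖∑' n : ℕ, w^(n+1)/D (n+1)‖ ≤ ∑' n : ℕ, ‖w^(n+1)/D (n+1)‖ :=
          norm_tsum_le_tsum_norm hsumnorm
      _ ≤ ∑' n : ℕ, ‖w‖ * (c⁻¹ * ‖z‖^n) := Summable.tsum_le_tsum hbnd hsumnorm hsumbnd
      _ = ‖w‖ * (c⁻¹ * (1 - ‖z‖)⁻¹) := by
          rw [tsum_mul_left, tsum_mul_left, tsum_geometric_of_lt_one (norm_nonneg z) hz]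
  have htendS : Filter.Tendsto (fun N : ℕ => S ((q:ℂ)^N * z)) Filter.atTop (nhds 1) := by
    have h1 : ∀ N : ℕ, ‖S ((q:ℂ)^N * z) - 1‖ ≤ q^N * (‖z‖ * (c⁻¹ * (1 - ‖z‖)⁻¹)) := by
      intro N
      have hnorm : ‖(q:ℂ)^N * z‖ = q^N * ‖z‖ := by rw [norm_mul, norm_pow, normQ hq0]
      have hle : ‖(q:ℂ)^N * z‖ ≤ ‖z‖ := by
        rw [hnorm]
        have h1 : q^N ≤ 1 := pow_le_one₀ hq0.le hq1.le
        nlinarith [norm_nonneg z]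
      have := hbound _ hle
      rw [hnorm] at this
      calc ‖S ((q:ℂ)^N * z) - 1‖ ≤ (q^N * ‖z‖) * (c⁻¹ * (1-‖z‖)⁻¹) := this
        _ = q^N * (‖z‖ * (c⁻¹ * (1-‖z‖)⁻¹)) := by ring
    have h2 : Filter.Tendsto (fun N : ℕ => q^N * (‖z‖ * (c⁻¹ * (1 - ‖z‖)⁻¹)))
        Filter.atTop (nhds 0) := by
      have := (tendsto_pow_atTop_nhds_zero_of_lt_one hq0.le hq1).mul_const
        (‖z‖ * (c⁻¹ * (1 - ‖z‖)⁻¹))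
      simpa using this
    have h3 := squeeze_zero_norm h1 h2
    have h4 := h3.add_const 1
    simpa using h4
  have htendP : Filter.Tendsto (fun N : ℕ => qpC (q:ℂ) z N * S z) Filter.atTop
      (nhds (qpInfC (q:ℂ) z * S z)) := by
    have h1 : HasProd (fun k : ℕ => 1 - z * (q:ℂ)^k) (qpInfC (q:ℂ) z) :=
      (mult_qp hq0 hq1 z).hasProd
    exact h1.tendsto_prod_nat.mul_const _
  have huniq : qpInfC (q:ℂ) z * S z = 1 := by
    refine tendsto_nhds_unique htendP ?_
    have h5 : (fun N : ℕ => qpC (q:ℂ) z N * S z) = fun N : ℕ => S ((q:ℂ)^N * z) := by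
      funext N; rw [hiter N]
    rw [h5]
    exact htendS
  have hne : qpInfC (q:ℂ) z ≠ 0 := left_ne_zero_of_mul_eq_one huniq
  have hSval : S z = (qpInfC (q:ℂ) z)⁻¹ := by
    field_simp
    linear_combination huniq
  refine ⟨hne, ?_⟩
  have := (hsummable z le_rfl).hasSum
  rw [show (∑' n : ℕ, z^n / D n) = S z from rfl, hSval] at this
  exact this

end euler

section finitepart

variable {q : ℝ} (hq0 : 0 < q) (hq1 : q < 1)

include hq0 in
lemma hQ0 : (q:ℂ) ≠ 0 := by exact_mod_cast hq0.ne'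

include hq0 hq1 in
lemma one_sub_qpow_ne (j : ℕ) (hj : j ≠ 0) : (1:ℂ) - (q:ℂ)^j ≠ 0 := by
  have h1 : q ^ j < 1 := pow_lt_one₀ hq0.le hq1 hj
  intro hcon
  have h2 : ((1 - q^j : ℝ) : ℂ) = 0 := by push_cast; linear_combination hcon
  have h3 : (1 - q^j : ℝ) = 0 := by exact_mod_cast h2
  linarith

include hq0 in
lemma qpC_neg_zero (x k : ℕ) (h : x < k) : qpC (q:ℂ) ((q:ℂ)^(-(x:ℤ))) k = 0 := by
  unfold qpC
  apply Finset.prod_eq_zero (Finset.mem_range.2 h)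
  rw [← zpow_natCast (q:ℂ) x, ← zpow_add₀ (hQ0 hq0)]
  simp

include hq0 hq1 in
lemma lemC (n : ℕ) : ∀ k, k ≤ n →
    qpC (q:ℂ) ((q:ℂ)^(-(n:ℤ))) k * (q:ℂ)^(n*k) * qpC (q:ℂ) (q:ℂ) (n-k)
      = (-1)^k * (q:ℂ)^(k*(k-1)/2) * qpC (q:ℂ) (q:ℂ) n := by
  intro k
  induction k with
  | zero => intro _; simp [qpC]
  | succ k ih =>
    intro hk
    have hk' : k ≤ n := by omega
    have ihe := ih hk'
    have e1 : qpC (q:ℂ) ((q:ℂ)^(-(n:ℤ))) (k+1)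
        = qpC (q:ℂ) ((q:ℂ)^(-(n:ℤ))) k * (1 - (q:ℂ)^(-(n:ℤ)) * (q:ℂ)^k) :=
      Finset.prod_range_succ _ _
    have e2 : qpC (q:ℂ) (q:ℂ) (n - k) = qpC (q:ℂ) (q:ℂ) (n-(k+1)) * (1 - (q:ℂ)^(n-k)) := by
      have h : n - k = (n - (k+1)) + 1 := by omega
      unfold qpC
      rw [h, Finset.prod_range_succ, ← pow_succ']
    have e3 : (1 - (q:ℂ)^(-(n:ℤ)) * (q:ℂ)^k) * (q:ℂ)^n = -((q:ℂ)^k) * (1 - (q:ℂ)^(n-k)) := by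
      have h1 : (q:ℂ)^(-(n:ℤ)) * (q:ℂ)^k * (q:ℂ)^n = (q:ℂ)^k := by
        rw [← zpow_natCast (q:ℂ) k, ← zpow_natCast (q:ℂ) n, ← zpow_add₀ (hQ0 hq0),
          ← zpow_add₀ (hQ0 hq0)]
        congr 1
        ring
      have h2 : (q:ℂ)^k * (q:ℂ)^(n-k) = (q:ℂ)^n := by
        rw [← pow_add]
        congr 1
        omega
      linear_combination - h1 - h2
    have e4 : (k+1)*((k+1)-1)/2 = k*(k-1)/2 + k := by
      have h : (k+1)*((k+1)-1) = k*(k-1) + k*2 := by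
        cases k with
        | zero => rfl
        | succ j => simp [Nat.succ_sub_one]; ring
      rw [h, Nat.add_mul_div_right _ _ (by norm_num : (0:ℕ) < 2)]
    have hne : (1:ℂ) - (q:ℂ)^(n-k) ≠ 0 := one_sub_qpow_ne hq0 hq1 (n-k) (by omega)
    apply mul_right_cancel₀ hne
    calc qpC (q:ℂ) ((q:ℂ)^(-(n:ℤ))) (k+1) * (q:ℂ)^(n*(k+1)) * qpC (q:ℂ) (q:ℂ) (n-(k+1))
          * (1 - (q:ℂ)^(n-k))
        = (qpC (q:ℂ) ((q:ℂ)^(-(n:ℤ))) k * (q:ℂ)^(n*k) * qpC (q:ℂ) (q:ℂ) (n-k))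
          * ((1 - (q:ℂ)^(-(n:ℤ)) * (q:ℂ)^k) * (q:ℂ)^n) := by
          rw [e1, e2, show n*(k+1) = n*k + n by ring, pow_add]
          ring
      _ = ((-1)^k * (q:ℂ)^(k*(k-1)/2) * qpC (q:ℂ) (q:ℂ) n)
          * (-((q:ℂ)^k) * (1 - (q:ℂ)^(n-k))) := by rw [ihe, e3]
      _ = (-1)^(k+1) * (q:ℂ)^((k+1)*((k+1)-1)/2) * qpC (q:ℂ) (q:ℂ) n * (1 - (q:ℂ)^(n-k)) := by
          rw [e4, pow_add, pow_succ]
          ring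

include hq0 in
lemma qpC_shift (x k : ℕ) :
    qpC (q:ℂ) ((q:ℂ)^(-((x:ℤ)+1))) (k+1)
      = (1 - (q:ℂ)^(-((x:ℤ)+1))) * qpC (q:ℂ) ((q:ℂ)^(-(x:ℤ))) k := by
  unfold qpC
  rw [Finset.prod_range_succ']
  have h1 : ∀ j, (q:ℂ)^(-((x:ℤ)+1)) * (q:ℂ)^(j+1) = (q:ℂ)^(-(x:ℤ)) * (q:ℂ)^j := by
    intro j
    rw [← zpow_natCast (q:ℂ) (j+1), ← zpow_natCast (q:ℂ) j, ← zpow_add₀ (hQ0 hq0),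
      ← zpow_add₀ (hQ0 hq0)]
    congr 1
    push_cast
    ring
  rw [Finset.prod_congr rfl (fun j _ => by rw [h1 j])]
  rw [mul_comm]
  simp

include hq0 hq1 in
lemma lemB (t : ℂ) : ∀ x : ℕ,
    ∑ k ∈ Finset.range (x+1), qpC (q:ℂ) ((q:ℂ)^(-(x:ℤ))) k / qpC (q:ℂ) (q:ℂ) k * t^k
      = ∏ i ∈ Finset.range x, (1 - t * (q:ℂ)^(-(i:ℤ)-1)) := by
  intro x
  induction x with
  | zero => simp [qpC]
  | succ x ih =>
    have hcast : (-((x+1 : ℕ) : ℤ)) = -(x:ℤ)-1 := by push_cast; ring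
    have hDrec : ∀ k : ℕ, qpC (q:ℂ) (q:ℂ) (k+1) = qpC (q:ℂ) (q:ℂ) k * (1 - (q:ℂ)^(k+1)) := by
      intro k
      unfold qpC
      rw [Finset.prod_range_succ, ← pow_succ']
    have hstep : ∀ k : ℕ,
        qpC (q:ℂ) ((q:ℂ)^(-((x+1:ℕ):ℤ))) (k+1) / qpC (q:ℂ) (q:ℂ) (k+1) * t^(k+1)
          = qpC (q:ℂ) ((q:ℂ)^(-(x:ℤ))) (k+1) / qpC (q:ℂ) (q:ℂ) (k+1) * t^(k+1)
            - ((q:ℂ)^(-((x+1:ℕ):ℤ)) * t)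
              * (qpC (q:ℂ) ((q:ℂ)^(-(x:ℤ))) k / qpC (q:ℂ) (q:ℂ) k * t^k) := by
      intro k
      have hrec1 : qpC (q:ℂ) ((q:ℂ)^(-((x+1:ℕ):ℤ))) (k+1)
          = qpC (q:ℂ) ((q:ℂ)^(-(x:ℤ))) (k+1)
            - (q:ℂ)^(-((x+1:ℕ):ℤ)) * qpC (q:ℂ) ((q:ℂ)^(-(x:ℤ))) k * (1 - (q:ℂ)^(k+1)) := by
        rw [hcast, show (-(x:ℤ)-1) = -((x:ℤ)+1) by ring, qpC_shift hq0]
        have e1 : qpC (q:ℂ) ((q:ℂ)^(-(x:ℤ))) (k+1)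
            = qpC (q:ℂ) ((q:ℂ)^(-(x:ℤ))) k * (1 - (q:ℂ)^(-(x:ℤ)) * (q:ℂ)^k) :=
          Finset.prod_range_succ _ _
        have e5 : (q:ℂ)^(-((x:ℤ)+1)) * (q:ℂ)^(k+1) = (q:ℂ)^(-(x:ℤ)) * (q:ℂ)^k := by
          rw [← zpow_natCast (q:ℂ) (k+1), ← zpow_natCast (q:ℂ) k, ← zpow_add₀ (hQ0 hq0),
            ← zpow_add₀ (hQ0 hq0)]
          congr 1
          push_cast
          ring
        rw [e1]
        linear_combination - qpC (q:ℂ) ((q:ℂ)^(-(x:ℤ))) k * e5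
      rw [hrec1, hDrec k]
      have h1 : qpC (q:ℂ) (q:ℂ) k ≠ 0 := qpC_q_ne hq0 hq1 k
      have h2 : (1:ℂ) - (q:ℂ)^(k+1) ≠ 0 := one_sub_qpow_ne hq0 hq1 (k+1) (Nat.succ_ne_zero k)
      field_simp
      ring
    rw [Finset.sum_range_succ']
    have hg0 : qpC (q:ℂ) ((q:ℂ)^(-((x+1:ℕ):ℤ))) 0 / qpC (q:ℂ) (q:ℂ) 0 * t^0 = 1 := by
      simp [qpC]
    rw [hg0]
    rw [Finset.sum_congr rfl (fun k _ => hstep k)]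
    rw [Finset.sum_sub_distrib, ← Finset.mul_sum]
    have hold : ∑ k ∈ Finset.range (x+1),
        qpC (q:ℂ) ((q:ℂ)^(-(x:ℤ))) (k+1) / qpC (q:ℂ) (q:ℂ) (k+1) * t^(k+1)
          = (∏ i ∈ Finset.range x, (1 - t * (q:ℂ)^(-(i:ℤ)-1))) - 1 := by
      have h3 := Finset.sum_range_succ'
        (fun k => qpC (q:ℂ) ((q:ℂ)^(-(x:ℤ))) k / qpC (q:ℂ) (q:ℂ) k * t^k) (x+1)
      have h4 : ∑ k ∈ Finset.range (x+2),
          qpC (q:ℂ) ((q:ℂ)^(-(x:ℤ))) k / qpC (q:ℂ) (q:ℂ) k * t^k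
            = ∏ i ∈ Finset.range x, (1 - t * (q:ℂ)^(-(i:ℤ)-1)) := by
        rw [Finset.sum_range_succ, qpC_neg_zero hq0 x (x+1) (by omega)]
        simp only [zero_div, zero_mul, add_zero]
        exact ih
      have h5 : qpC (q:ℂ) ((q:ℂ)^(-(x:ℤ))) 0 / qpC (q:ℂ) (q:ℂ) 0 * t^0 = 1 := by simp [qpC]
      rw [h4, h5] at h3
      linear_combination - h3
    rw [hold, ih, Finset.prod_range_succ, hcast]
    ring

end finitepart


/-- The terminating series `₂φ₀(q^{-n}, s; —; q, q^n/a)` at `s = q^{-x}`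
(Gasper–Rahman convention: each term carries `((-1)^k q^{k(k-1)/2})^{-1}`). -/
noncomputable def phi20C (q : ℝ) (a : ℂ) (x n : ℕ) : ℂ :=
  ∑ k ∈ Finset.range (n + 1),
    qpC (q : ℂ) ((q : ℂ) ^ (-(n : ℤ))) k * qpC (q : ℂ) ((q : ℂ) ^ (-(x : ℤ))) k /
      qpC (q : ℂ) (q : ℂ) k *
      ((-1 : ℂ) ^ k * (q : ℂ) ^ (k * (k - 1) / 2))⁻¹ * ((q : ℂ) ^ n / a) ^ k

/-- Al-Salam–Carlitz II polynomial
`V_n^{(a)}(q^{-x};q) = (-a)^n q^{-n(n-1)/2} ₂φ₀(q^{-n}, q^{-x}; —; q, q^n/a)`. -/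
noncomputable def alSalamCarlitzIIC (q : ℝ) (a : ℂ) (x n : ℕ) : ℂ :=
  (-a) ^ n * ((q : ℂ) ^ (n * (n - 1) / 2))⁻¹ * phi20C q a x n

set_option maxHeartbeats 1000000 in
/-- Generating function (3.25.11) for the Al-Salam–Carlitz II polynomials:
`∑_{n≥0} ((-1)^n q^{n(n-1)/2}/(q;q)_n) t^n V_n^{(a)}(q^{-x};q)
  = (tq^{-x};q)_∞ / ((at;q)_∞ (t;q)_∞)`. -/
theorem alSalamCarlitzII_genfun (q : ℝ) (hq0 : 0 < q) (hq1 : q < 1) (a t : ℂ)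
    (ha : a ≠ 0) (ht : ‖t‖ < 1) (hat : ‖a * t‖ < 1) (x : ℕ) :
    HasSum (fun n : ℕ =>
        (-1 : ℂ) ^ n * (q : ℂ) ^ (n * (n - 1) / 2) / qpC (q : ℂ) (q : ℂ) n * t ^ n *
          alSalamCarlitzIIC q a x n)
      (qpInfC (q : ℂ) (t * (q : ℂ) ^ (-(x : ℤ))) /
        (qpInfC (q : ℂ) (a * t) * qpInfC (q : ℂ) t)) := by
  have hQ : (q:ℂ) ≠ 0 := hQ0 hq0
  have htn : ‖t‖ < 1 := by exact ht
  have hatn : ‖a*t‖ < 1 := by exact hat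
  obtain ⟨hVt, _⟩ := euler_hasSum hq0 hq1 htn
  obtain ⟨hVat, hSat⟩ := euler_hasSum hq0 hq1 hatn
  set A : ℕ → ℂ := fun k => qpC (q:ℂ) ((q:ℂ)^(-(x:ℤ))) k / qpC (q:ℂ) (q:ℂ) k * t^k with hA
  set B : ℕ → ℂ := fun m => (a*t)^m / qpC (q:ℂ) (q:ℂ) m with hB
  set e : ℕ → ℕ → ℂ := fun n k => if k ≤ n then B (n-k) else 0 with he
  -- term rewriting
  have key : ∀ n : ℕ,
      (-1:ℂ)^n * (q:ℂ)^(n*(n-1)/2) / qpC (q:ℂ) (q:ℂ) n * t^n * alSalamCarlitzIIC q a x n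
        = ∑ k ∈ Finset.range (n+1), A k * e n k := by
    intro n
    unfold alSalamCarlitzIIC phi20C
    have hQp : (q:ℂ)^(n*(n-1)/2) ≠ 0 := pow_ne_zero _ hQ
    have hDn : qpC (q:ℂ) (q:ℂ) n ≠ 0 := qpC_q_ne hq0 hq1 n
    have h1 : ∀ sφ : ℂ, (-1:ℂ)^n * (q:ℂ)^(n*(n-1)/2) / qpC (q:ℂ) (q:ℂ) n * t^n
        * ((-a)^n * ((q:ℂ)^(n*(n-1)/2))⁻¹ * sφ) = (a*t)^n / qpC (q:ℂ) (q:ℂ) n * sφ := by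
      intro s
      have h2 : ((q:ℂ)^(n*(n-1)/2)) * ((q:ℂ)^(n*(n-1)/2))⁻¹ = 1 := mul_inv_cancel₀ hQp
      have h3 : ((-1:ℂ))^n * (-a)^n = a^n := by
        rw [← mul_pow, show ((-1:ℂ))*(-a) = a by ring]
      calc (-1:ℂ)^n * (q:ℂ)^(n*(n-1)/2) / qpC (q:ℂ) (q:ℂ) n * t^n
            * ((-a)^n * ((q:ℂ)^(n*(n-1)/2))⁻¹ * s)
          = ((-1:ℂ)^n * (-a)^n) * ((q:ℂ)^(n*(n-1)/2) * ((q:ℂ)^(n*(n-1)/2))⁻¹)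
            * (t^n / qpC (q:ℂ) (q:ℂ) n) * s := by ring
        _ = a^n * 1 * (t^n / qpC (q:ℂ) (q:ℂ) n) * s := by rw [h2, h3]
        _ = (a*t)^n / qpC (q:ℂ) (q:ℂ) n * s := by rw [mul_pow]; ring
    rw [h1, Finset.mul_sum]
    apply Finset.sum_congr rfl
    intro k hk
    have hkn : k ≤ n := by
      have := Finset.mem_range.1 hk
      omega
    have hek : e n k = B (n-k) := if_pos hkn
    rw [hek]
    have hDk : qpC (q:ℂ) (q:ℂ) k ≠ 0 := qpC_q_ne hq0 hq1 k
    have hDnk : qpC (q:ℂ) (q:ℂ) (n-k) ≠ 0 := qpC_q_ne hq0 hq1 (n-k)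
    have hQnk : (q:ℂ)^(n*k) ≠ 0 := pow_ne_zero _ hQ
    have hC := lemC hq0 hq1 n k hkn
    have hm1 : ((-1:ℂ))^k ≠ 0 := pow_ne_zero _ (by norm_num)
    have hQkk : (q:ℂ)^(k*(k-1)/2) ≠ 0 := pow_ne_zero _ hQ
    have hak : a^k ≠ 0 := pow_ne_zero _ ha
    have hWne : qpC (q:ℂ) ((q:ℂ)^(-(n:ℤ))) k ≠ 0 := by
      intro h0
      rw [h0, zero_mul, zero_mul] at hC
      exact (mul_ne_zero (mul_ne_zero hm1 hQkk) hDn) hC.symm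
    have h6 : (-1:ℂ)^k * (q:ℂ)^(k*(k-1)/2)
        = qpC (q:ℂ) ((q:ℂ)^(-(n:ℤ))) k * (q:ℂ)^(n*k) * qpC (q:ℂ) (q:ℂ) (n-k)
          / qpC (q:ℂ) (q:ℂ) n := by
      rw [eq_div_iff hDn]
      linear_combination - hC
    rw [h6]
    have hpow : ((q:ℂ)^n / a)^k = (q:ℂ)^(n*k) / a^k := by
      rw [div_pow, ← pow_mul]
    rw [hpow]
    have h4 : (a*t)^n = (a^k * t^k) * (a*t)^(n-k) := by
      rw [← mul_pow, ← pow_add]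
      congr 1
      omega
    rw [hA, hB]
    simp only
    rw [h4]
    trans ((qpC (q:ℂ) ((q:ℂ)^(-(n:ℤ))) k * (qpC (q:ℂ) ((q:ℂ)^(-(n:ℤ))) k)⁻¹)
      * (qpC (q:ℂ) (q:ℂ) n * (qpC (q:ℂ) (q:ℂ) n)⁻¹)
      * ((q:ℂ)^(n*k) * ((q:ℂ)^(n*k))⁻¹) * (a^k * (a^k)⁻¹)
      * (qpC (q:ℂ) ((q:ℂ)^(-(x:ℤ))) k / qpC (q:ℂ) (q:ℂ) k * t^k
          * ((a*t)^(n-k) / qpC (q:ℂ) (q:ℂ) (n-k))))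
    · rw [inv_div]
      ring
    · rw [mul_inv_cancel₀ hWne, mul_inv_cancel₀ hDn, mul_inv_cancel₀ hQnk, mul_inv_cancel₀ hak]
      ring
  have hconv : ∀ n : ℕ, ∑ k ∈ Finset.range (n+1), A k * e n k
      = ∑ k ∈ Finset.range (x+1), A k * e n k := by
    intro n
    rcases le_total n x with h | h
    · apply Finset.sum_subset
      · intro k hk
        simp only [Finset.mem_range] at *
        omega
      · intro k _ hnk
        have hkgt : ¬ k ≤ n := by
          simp only [Finset.mem_range] at hnk
          omega
        simp [he, hkgt]
    · symm
      apply Finset.sum_subset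
      · intro k hk
        simp only [Finset.mem_range] at *
        omega
      · intro k _ hnk
        have hkgt : x < k := by
          simp only [Finset.mem_range] at hnk
          omega
        have : A k = 0 := by
          rw [hA]
          simp only
          rw [qpC_neg_zero hq0 x k hkgt, zero_div, zero_mul]
        rw [this, zero_mul]
  have hBsum : HasSum B ((qpInfC (q:ℂ) (a*t))⁻¹) := hSat
  have heks : ∀ k : ℕ, HasSum (fun n => A k * e n k) (A k * (qpInfC (q:ℂ) (a*t))⁻¹) := by
    intro k
    apply HasSum.mul_left
    have hinj : Function.Injective (fun m : ℕ => m + k) := by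
      intro m n h
      have h' : m + k = n + k := h
      omega
    have hoff : ∀ n, n ∉ Set.range (fun m : ℕ => m + k) → e n k = 0 := by
      intro n hn
      have hkgt : ¬ k ≤ n := by
        intro hcon
        apply hn
        refine ⟨n - k, ?_⟩
        show n - k + k = n
        omega
      simp [he, hkgt]
    refine (Function.Injective.hasSum_iff hinj hoff).1 ?_
    have hcomp : ((fun n => e n k) ∘ (fun m : ℕ => m + k)) = B := by
      funext m
      simp only [he, Function.comp_apply, Nat.le_add_left, if_pos, Nat.add_sub_cancel]
    rw [hcomp]
    exact hBsum
  have hsum2 : HasSum (fun n => ∑ k ∈ Finset.range (x+1), A k * e n k)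
      ((∑ k ∈ Finset.range (x+1), A k) * (qpInfC (q:ℂ) (a*t))⁻¹) := by
    have h := hasSum_sum (f := fun (k : ℕ) (n : ℕ) => A k * e n k)
      (a := fun k => A k * (qpInfC (q:ℂ) (a*t))⁻¹) (s := Finset.range (x+1))
      (fun k _ => heks k)
    rwa [← Finset.sum_mul] at h
  -- value identification
  have hsplit := qpInf_split hq0 hq1 (t * (q:ℂ)^(-(x:ℤ))) x
  have harg : (t * (q:ℂ)^(-(x:ℤ))) * (q:ℂ)^x = t := by
    rw [mul_assoc, ← zpow_natCast (q:ℂ) x, ← zpow_add₀ hQ]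
    simp
  have hprodeq : (∏ k ∈ Finset.range x, (1 - (t * (q:ℂ)^(-(x:ℤ))) * (q:ℂ)^k))
      = ∏ i ∈ Finset.range x, (1 - t * (q:ℂ)^(-(i:ℤ)-1)) := by
    rw [← Finset.prod_range_reflect]
    apply Finset.prod_congr rfl
    intro i hi
    have hix : i < x := Finset.mem_range.1 hi
    congr 1
    rw [mul_assoc]
    congr 1
    rw [← zpow_natCast (q:ℂ) (x-1-i), ← zpow_add₀ hQ]
    congr 1
    omega
  have hFval : ∑ k ∈ Finset.range (x+1), A k
      = ∏ i ∈ Finset.range x, (1 - t * (q:ℂ)^(-(i:ℤ)-1)) := lemB hq0 hq1 t x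
  have hval : qpInfC (q:ℂ) (t * (q:ℂ)^(-(x:ℤ))) / (qpInfC (q:ℂ) (a*t) * qpInfC (q:ℂ) t)
      = (∑ k ∈ Finset.range (x+1), A k) * (qpInfC (q:ℂ) (a*t))⁻¹ := by
    rw [hsplit, harg, hprodeq, ← hFval]
    field_simp
  rw [hval]
  have hfun : (fun n : ℕ =>
      (-1:ℂ)^n * (q:ℂ)^(n*(n-1)/2) / qpC (q:ℂ) (q:ℂ) n * t^n * alSalamCarlitzIIC q a x n)
        = fun n => ∑ k ∈ Finset.range (x+1), A k * e n k := by
    funext n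
    rw [key n, hconv n]
  rw [hfun]
  exact hsum2
end
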